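/- Let n ≥ 0 be an integer and let b, c, f be complex numbers such that c − b − f is not equal to any integer m with −n ≤ m ≤ n. Then 1 = ∑_{j=0}^{n} (−1)^j · C(n, j) · (b)^(j) · (c − f)^(n−j) · (c − b − f + n − 2j) / (c − b − f − j)^(n+1). -/

import Mathlib

/-- The rising factorial (Pochhammer symbol) `(y)^(k) = y(y+1)⋯(y+k-1)`. -/
noncomputable def risingFactorial (x : ℂ) (n : ℕ) : ℂ :=
  ∏ i ∈ Finset.range n, (x + i)

lemma rf_succ (x : ℂ) (k : ℕ) :
    risingFactorial x (k + 1) = risingFactorial x k * (x + k) :=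
  Finset.prod_range_succ _ _

lemma rf_succ' (x : ℂ) (k : ℕ) :
    risingFactorial x (k + 1) = x * risingFactorial (x + 1) k := by
  rw [risingFactorial, Finset.prod_range_succ', risingFactorial]
  rw [mul_comm]
  norm_num
  left
  apply Finset.prod_congr rfl
  intro i _
  ring

lemma rf_ne_zero {x : ℂ} {k : ℕ} (h : ∀ i < k, x + i ≠ 0) : risingFactorial x k ≠ 0 := by
  rw [risingFactorial, Finset.prod_ne_zero_iff]
  intro i hi
  exact h i (Finset.mem_range.mp hi)

lemma rf_sub_ne_zero {x : ℂ} {n : ℕ}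
    (h : ∀ m : ℤ, -(n : ℤ) ≤ m → m ≤ (n : ℤ) → x ≠ m)
    {j k : ℕ} (hj : j ≤ n) (hk : k ≤ n + 1) :
    risingFactorial (x - j) k ≠ 0 := by
  apply rf_ne_zero
  intro i hi
  have hi' : i ≤ n := by omega
  have hx := h ((j : ℤ) - i) (by omega) (by omega)
  intro hzero
  apply hx
  have hx2 : x = (j : ℂ) - i := by linear_combination hzero
  rw [hx2]; push_cast; ring

lemma scalar (n j : ℕ) (hj : j ≤ n + 1) (x : ℂ) :
    ((n:ℂ)+1) * (((n+1).choose j : ℕ) : ℂ) * (x + (n+1) - 2*j) =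
    ((n:ℂ)+1) * ((n.choose j : ℕ) : ℂ) * (x + (n+1) - j) + (j:ℂ) * (((n+1).choose j : ℕ) : ℂ) * (x - j) := by
  have h0 := Nat.choose_mul_succ_eq n j
  have h1 : ((n:ℂ)+1-j) * (((n+1).choose j : ℕ) : ℂ) = ((n:ℂ)+1) * ((n.choose j : ℕ) : ℂ) := by
    have : ((n.choose j * (n+1) : ℕ) : ℂ) = (((n+1).choose j * (n+1-j) : ℕ) : ℂ) := by
      exact_mod_cast congrArg (Nat.cast : ℕ → ℂ) h0
    push_cast [Nat.cast_sub hj] at this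
    linear_combination -this
  linear_combination (x + (n:ℂ) + 1 - j) * h1

lemma castA (n jj : ℕ) :
    ((jj:ℂ) + 1) * (((n+1).choose (jj+1) : ℕ) : ℂ) = ((n:ℂ)+1) * ((n.choose jj : ℕ) : ℂ) := by
  have := congrArg (Nat.cast : ℕ → ℂ) (Nat.add_one_mul_choose_eq n jj)
  push_cast at this
  linear_combination -this

lemma scalar' (n jj : ℕ) (hj : jj + 1 ≤ n + 1) (x : ℂ) :
    (((n+1).choose (jj+1) : ℕ) : ℂ) * (x + ((n:ℂ)+1) - 2 * ((jj:ℂ)+1)) =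
    ((n.choose (jj+1) : ℕ) : ℂ) * (x + ((n:ℂ)+1) - ((jj:ℂ)+1))
      + ((n.choose jj : ℕ) : ℂ) * (x - ((jj:ℂ)+1)) := by
  have hn1 : ((n:ℂ)+1) ≠ 0 := Nat.cast_add_one_ne_zero n
  have hA := castA n jj
  have hs := scalar n (jj+1) hj x
  push_cast at hs
  refine mul_left_cancel₀ hn1 ?_
  linear_combination hs + (x - ((jj:ℂ)+1)) * hA

lemma natW (n jj : ℕ) : (jj+1) * (n+1).choose (jj+1) / (n+1) = n.choose jj := by
  have h := Nat.add_one_mul_choose_eq n jj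
  rw [mul_comm]
  rw [show ((n+1).choose (jj+1) * (jj+1)) = (n+1) * n.choose jj from by
    rw [← h]]
  exact Nat.mul_div_cancel_left _ (Nat.succ_pos n)

lemma key (n : ℕ) : ∀ (x bb : ℂ),
    (∀ m : ℤ, -(n : ℤ) ≤ m → m ≤ (n : ℤ) → x ≠ m) →
    1 = ∑ j ∈ Finset.range (n + 1),
        (-1) ^ j * (n.choose j : ℂ) * risingFactorial bb j *
          risingFactorial (x + bb) (n - j) *
            (x + n - 2 * j) / risingFactorial (x - j) (n + 1) := by
  induction n with
  | zero =>
      intro x bb h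
      have hx : x ≠ 0 := by simpa using h 0 (by norm_num) (by norm_num)
      simp [risingFactorial, Finset.prod_range_one]
      field_simp
  | succ n ih =>
      intro x bb h
      have h' : ∀ m : ℤ, -(n : ℤ) ≤ m → m ≤ (n : ℤ) → x ≠ m :=
        fun m hm1 hm2 => h m (by omega) (by omega)
      have hn1 : ((n:ℂ) + 1) ≠ 0 := Nat.cast_add_one_ne_zero n
      have hQ : ∀ j : ℕ, j ≤ n + 1 → risingFactorial (x - j) (n + 1) ≠ 0 :=
        fun j hj => rf_sub_ne_zero h hj (by omega)
      have hP : ∀ j : ℕ, 1 ≤ j → j ≤ n + 1 → risingFactorial (x + 1 - j) (n + 1) ≠ 0 := by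
        intro j h1 h2
        have hrw : x + 1 - (j : ℂ) = x - ((j - 1 : ℕ) : ℂ) := by
          push_cast [Nat.cast_sub h1]; ring
        rw [hrw]
        exact rf_sub_ne_zero h (by omega) (by omega)
      have hxj : ∀ j : ℕ, j ≤ n + 1 → x + ((n:ℂ) + 1) - j ≠ 0 := by
        intro j hj hzero
        exact h ((j : ℤ) - (n + 1)) (by omega) (by omega)
          (by push_cast; linear_combination hzero)
      set T : ℕ → ℂ := fun j => (-1) ^ j * ((n+1).choose j : ℂ) * risingFactorial bb j *
          risingFactorial (x + bb) (n + 1 - j) *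
            (x + (n+1 : ℕ) - 2 * j) / risingFactorial (x - j) (n + 1 + 1) with hT
      set V : ℕ → ℂ := fun j => (-1) ^ j * (n.choose j : ℂ) * risingFactorial bb j *
          risingFactorial (x + bb) (n + 1 - j) / risingFactorial (x - j) (n + 1) with hV
      set U : ℕ → ℂ := fun j => (-1) ^ j * ((j * (n+1).choose j / (n+1) : ℕ) : ℂ) *
          risingFactorial bb j * risingFactorial (x + bb) (n + 1 - j) /
            risingFactorial (x + 1 - j) (n + 1) with hU
      show 1 = ∑ j ∈ Finset.range (n + 1 + 1), T j
      have hsplit : ∀ j ∈ Finset.range (n + 1 + 1), T j = V j + U j := by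
        intro j hj
        rw [Finset.mem_range] at hj
        have hj' : j ≤ n + 1 := by omega
        have hQ' := hQ j hj'
        have hxj' := hxj j hj'
        rcases Nat.eq_zero_or_pos j with rfl | hj1
        · -- j = 0
          simp only [hT, hV, hU, Nat.cast_zero, pow_zero, one_mul, mul_zero, zero_mul,
            sub_zero, zero_div, mul_one, add_zero, Nat.sub_zero, Nat.zero_div, Nat.zero_mul]
          have hD0 : risingFactorial x (n + 1 + 1)
              = risingFactorial x (n + 1) * (x + ((n:ℂ) + 1)) := by
            rw [rf_succ]; push_cast; ring_nf
          rw [hD0]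
          rw [show x - (0:ℕ) = x from by norm_num] at hQ'
          rw [show x + ((n:ℂ)+1) - (0:ℕ) = x + ((n:ℂ)+1) from by norm_num] at hxj'
          field_simp
          push_cast [Nat.choose_zero_right]
          ring
        · -- j ≥ 1
          obtain ⟨jj, rfl⟩ : ∃ jj, j = jj + 1 := ⟨j - 1, by omega⟩
          simp only [hT, hV, hU, natW n jj]
          have hP' := hP (jj+1) (by omega) hj'
          have hD : risingFactorial (x - (jj+1 : ℕ)) (n + 1 + 1)
              = risingFactorial (x - (jj+1 : ℕ)) (n + 1) * (x + ((n:ℂ)+1) - (jj+1 : ℕ)) := by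
            rw [rf_succ]; push_cast; ring_nf
          have hPQ : (x - ((jj+1 : ℕ) : ℂ)) * risingFactorial (x + 1 - (jj+1 : ℕ)) (n + 1)
              = risingFactorial (x - (jj+1 : ℕ)) (n + 1) * (x + ((n:ℂ)+1) - (jj+1 : ℕ)) := by
            have h2 := rf_succ' (x - ((jj+1 : ℕ) : ℂ)) (n+1)
            have h3 := rf_succ (x - ((jj+1 : ℕ) : ℂ)) (n+1)
            rw [show x - ((jj+1 : ℕ) : ℂ) + 1 = x + 1 - ((jj+1 : ℕ) : ℂ) from by ring] at h2
            rw [← h2, h3]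
            push_cast; ring
          rw [hD, div_add_div _ _ hQ' hP',
            div_eq_div_iff (mul_ne_zero hQ' hxj') (mul_ne_zero hQ' hP')]
          have hsc := scalar' n jj hj' x
          push_cast at hsc hPQ ⊢
          linear_combination ((-1:ℂ)^(jj+1) * risingFactorial bb (jj+1)
              * risingFactorial (x + bb) (n - jj) * risingFactorial (x - ((jj:ℂ)+1)) (n + 1)
              * risingFactorial (x + 1 - ((jj:ℂ)+1)) (n + 1)) * hsc
            + ((-1:ℂ)^(jj+1) * ((n.choose jj : ℕ) : ℂ) * risingFactorial bb (jj+1)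
              * risingFactorial (x + bb) (n - jj)
              * risingFactorial (x - ((jj:ℂ)+1)) (n + 1)) * hPQ
      rw [Finset.sum_congr rfl hsplit, Finset.sum_add_distrib]
      have hVlast : V (n+1) = 0 := by
        simp [hV, Nat.choose_succ_self]
      have hU0 : U 0 = 0 := by
        simp [hU]
      have e1 : ∑ j ∈ Finset.range (n+1+1), V j = ∑ j ∈ Finset.range (n+1), V j := by
        rw [Finset.sum_range_succ, hVlast, add_zero]
      have e2 : ∑ j ∈ Finset.range (n+1+1), U j = ∑ j ∈ Finset.range (n+1), U (j+1) := by
        rw [Finset.sum_range_succ' U (n+1), hU0, add_zero]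
      rw [e1, e2, ← Finset.sum_add_distrib]
      have hterm : ∀ j ∈ Finset.range (n+1), V j + U (j+1)
          = (-1) ^ j * (n.choose j : ℂ) * risingFactorial bb j *
            risingFactorial (x + bb) (n - j) *
              (x + n - 2 * j) / risingFactorial (x - j) (n + 1) := by
        intro j hj
        rw [Finset.mem_range] at hj
        have hjn : j ≤ n := by omega
        simp only [hV, hU, natW n j]
        rw [show n + 1 - j = (n - j) + 1 from by omega, rf_succ]
        rw [show n + 1 - (j + 1) = n - j from by omega]
        rw [rf_succ bb j]
        rw [show x + 1 - ((j+1 : ℕ) : ℂ) = x - (j : ℕ) from by push_cast; ring]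
        push_cast [Nat.cast_sub hjn]
        ring
      rw [Finset.sum_congr rfl hterm]
      exact ih x bb h'

theorem stmt_15 (n : ℕ) (b c f : ℂ)
    (h : ∀ m : ℤ, -(n : ℤ) ≤ m → m ≤ (n : ℤ) → c - b - f ≠ m) :
    1 = ∑ j ∈ Finset.range (n + 1),
        (-1) ^ j * (n.choose j : ℂ) * risingFactorial b j *
          risingFactorial (c - f) (n - j) *
            (c - b - f + n - 2 * j) / risingFactorial (c - b - f - j) (n + 1) := by
  rw [show c - f = c - b - f + b from by ring]
  exact key n (c - b - f) b h
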